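/- (First variation formula for a higher-order Lagrangian, standard case.) Let n, k ≥ 1, t₀ < t₁, let L : (Fin (k+1) → ℝ^n) → ℝ be smooth, and let q, h : ℝ → ℝ^n be smooth with h^{(j)}(t₀) = h^{(j)}(t₁) = 0 for all 0 ≤ j ≤ k−1. Then the function s ↦ ∫_{t₀}^{t₁} L(jet_k(q + s•h)(t)) dt is differentiable at s = 0, and its derivative there equals ∫_{t₀}^{t₁} ( ∑_{r=0}^{k} (−1)^r · D^r[t ↦ ∂_rL(jet_k q(t))](t) )(h(t)) dt, where D^r denotes the r-th iterated derivative of the (ℝ^n →ₗ[ℝ] ℝ)-valued map t ↦ ∂_rL(jet_k q(t)). -/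

import Mathlib

noncomputable section

/-!
Differentiating under the integral sign (the `s`-derivative of the integrand is jointly
continuous, hence bounded on a compact set) turns the derivative at `s = 0` into
`∫ dL(jet_k q)(jet_k h) = ∑_r ∫ ∂_r L(jet_k q)(h^{(r)})`. Integrating the `r`-th term by parts
`r` times moves all derivatives onto `∂_r L(jet_k q)`; every boundary term contains some
`h^{(j)}` with `j < r ≤ k` at an endpoint, so it vanishes.
-/

/-- Partial Fréchet derivative in slot `r` of a map defined on `Fin m → E`,
as a continuous linear map (zero junk value for `r ≥ m`). -/
def pd {m : ℕ} {E W : Type*} [NormedAddCommGroup E] [NormedSpace ℝ E]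
    [NormedAddCommGroup W] [NormedSpace ℝ W]
    (F : (Fin m → E) → W) (r : ℕ) (A : Fin m → E) : E →L[ℝ] W :=
  if h : r < m then
    (fderiv ℝ F A).comp
      (ContinuousLinearMap.pi (Pi.single (⟨r, h⟩ : Fin m) (ContinuousLinearMap.id ℝ E)))
  else 0

/-- The `k`-jet of a curve: `jet k q t = (q t, q' t, …, q^{(k)} t)`. -/
def jet {E : Type*} [NormedAddCommGroup E] [NormedSpace ℝ E] (k : ℕ) (q : ℝ → E) (t : ℝ) :
    Fin (k + 1) → E := fun r => iteratedDeriv r q t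

open Set Function intervalIntegral
open scoped ContDiff

section ParametricIntegral

variable {E V : Type*} [NormedAddCommGroup E] [NormedSpace ℝ E]
  [NormedAddCommGroup V] [NormedSpace ℝ V]

theorem hasDerivAt_intervalIntegral_of_continuous_deriv {F F' : ℝ → ℝ → E}
    (hF : Continuous (uncurry F)) (hF' : Continuous (uncurry F'))
    (hderiv : ∀ s t, HasDerivAt (F · t) (F' s t) s) (a b s₀ : ℝ) :
    HasDerivAt (fun s => ∫ t in a..b, F s t) (∫ t in a..b, F' s₀ t) s₀ := by
  obtain ⟨C, hC⟩ := (isCompact_closedBall s₀ 1 |>.prod isCompact_uIcc).exists_bound_of_continuousOn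
    (hF'.continuousOn (s := Metric.closedBall s₀ 1 ×ˢ uIcc a b))
  have hFs : ∀ s, Continuous (F s) := fun s => hF.comp (Continuous.prodMk_right s)
  refine (hasDerivAt_integral_of_dominated_loc_of_deriv_le (bound := fun _ => C)
    (Metric.closedBall_mem_nhds s₀ one_pos)
    (.of_forall fun s => (hFs s).aestronglyMeasurable) ((hFs s₀).intervalIntegrable _ _)
    (hF'.comp (Continuous.prodMk_right s₀)).aestronglyMeasurable
    (.of_forall fun t ht s hs => hC (s, t) ⟨hs, uIoc_subset_uIcc ht⟩)
    intervalIntegrable_const (.of_forall fun t _ s _ => hderiv s t)).2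

theorem hasDerivAt_intervalIntegral_comp_add_smul {Φ : V → E} (hΦ : ContDiff ℝ 1 Φ)
    {u v : ℝ → V} (hu : Continuous u) (hv : Continuous v) (a b : ℝ) :
    HasDerivAt (fun s : ℝ => ∫ t in a..b, Φ (u t + s • v t))
      (∫ t in a..b, fderiv ℝ Φ (u t) (v t)) 0 := by
  have hline : Continuous fun p : ℝ × ℝ => u p.2 + p.1 • v p.2 :=
    (hu.comp continuous_snd).add (continuous_fst.smul (hv.comp continuous_snd))
  have := hasDerivAt_intervalIntegral_of_continuous_deriv
    (F := fun s t => Φ (u t + s • v t)) (F' := fun s t => fderiv ℝ Φ (u t + s • v t) (v t))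
    (hΦ.continuous.comp hline)
    ((hΦ.continuous_fderiv one_ne_zero).comp hline |>.clm_apply (hv.comp continuous_snd))
    (fun s t => ?_) a b 0
  · simpa using this
  · have hs : HasDerivAt (fun s : ℝ => u t + s • v t) (v t) s := by
      simpa using ((hasDerivAt_id s).smul_const (v t)).const_add (u t)
    exact ((hΦ.differentiable one_ne_zero) _).hasFDerivAt.comp_hasDerivAt s hs

end ParametricIntegral

section Jets

variable {E W : Type*} [NormedAddCommGroup E] [NormedSpace ℝ E]
  [NormedAddCommGroup W] [NormedSpace ℝ W]

theorem contDiff_jet (k : ℕ) {q : ℝ → E} (hq : ContDiff ℝ ∞ q) : ContDiff ℝ ∞ (jet k q) :=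
  contDiff_pi.2 fun r => by
    change ContDiff ℝ ∞ (iteratedDeriv r q)
    rw [iteratedDeriv_eq_iterate]
    exact hq.iterate_deriv r

theorem jet_add_smul {k : ℕ} {q h : ℝ → E} (hq : ContDiff ℝ k q) (hh : ContDiff ℝ k h)
    (s t : ℝ) : jet k (q + s • h) t = jet k q t + s • jet k h t := by
  funext r
  have hr : (r : ℕ∞ω) ≤ k := mod_cast Nat.lt_succ_iff.mp r.isLt
  simp only [jet, Pi.add_apply, Pi.smul_apply]
  have hsh : ContDiffAt ℝ r (s • h) t := ((hh.of_le hr).const_smul s).contDiffAt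
  rw [iteratedDeriv_add (hq.of_le hr).contDiffAt hsh, iteratedDeriv_const_smul_field]

theorem pd_apply {m : ℕ} (F : (Fin m → E) → W) (i : Fin m) (A : Fin m → E) (x : E) :
    pd F i A x = fderiv ℝ F A (Pi.single i x) := by
  simp only [pd, dif_pos i.isLt, Fin.eta, ContinuousLinearMap.comp_apply]
  congr 1
  funext j
  by_cases hj : j = i <;> simp [hj]

theorem fderiv_apply_eq_sum_pd {m : ℕ} (F : (Fin m → E) → W) (A v : Fin m → E) :
    fderiv ℝ F A v = ∑ i : Fin m, pd F i A (v i) := by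
  conv_lhs => rw [← Finset.univ_sum_single v, map_sum]
  simp only [pd_apply]

theorem contDiff_pd {m : ℕ} {F : (Fin m → E) → W} (hF : ContDiff ℝ ∞ F) (r : ℕ) :
    ContDiff ℝ ∞ (pd F r) := by
  unfold pd
  split_ifs with hr
  · exact ((ContinuousLinearMap.compL ℝ E (Fin m → E) W).flip
      (ContinuousLinearMap.pi (Pi.single (⟨r, hr⟩ : Fin m) (ContinuousLinearMap.id ℝ E))))
      |>.contDiff.comp (hF.fderiv_right (by simp))
  · exact contDiff_const

def eulerLagrange {k : ℕ} (L : (Fin (k + 1) → E) → W) (q : ℝ → E) (t : ℝ) : E →L[ℝ] W :=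
  ∑ r ∈ Finset.range (k + 1), (-1 : ℝ) ^ r • iteratedDeriv r (fun u => pd L r (jet k q u)) t

end Jets

section IntegrationByParts

variable {E W : Type*} [NormedAddCommGroup E] [NormedSpace ℝ E]
  [NormedAddCommGroup W] [NormedSpace ℝ W] [CompleteSpace W]

theorem integral_clm_apply_deriv_eq_neg {f : ℝ → E →L[ℝ] W} {u : ℝ → E}
    (hf : ContDiff ℝ 1 f) (hu : ContDiff ℝ 1 u) {a b : ℝ} (ha : u a = 0) (hb : u b = 0) :
    ∫ t in a..b, f t (deriv u t) = -∫ t in a..b, deriv f t (u t) := by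
  have hcont₁ : Continuous fun t => deriv f t (u t) :=
    (hf.continuous_deriv le_rfl).clm_apply hu.continuous
  have hcont₂ : Continuous fun t => f t (deriv u t) :=
    hf.continuous.clm_apply (hu.continuous_deriv le_rfl)
  have hftc := integral_eq_sub_of_hasDerivAt
    (fun t _ => ((hf.differentiable one_ne_zero t).hasDerivAt).clm_apply
      (hu.differentiable one_ne_zero t).hasDerivAt)
    ((hcont₁.add hcont₂).intervalIntegrable a b)
  rw [integral_add (hcont₁.intervalIntegrable a b) (hcont₂.intervalIntegrable a b), ha, hb,
    map_zero, map_zero, sub_zero] at hftc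
  exact eq_neg_of_add_eq_zero_right hftc

theorem integral_clm_apply_iteratedDeriv_eq {a b : ℝ} :
    ∀ (r : ℕ) {f : ℝ → E →L[ℝ] W} {g : ℝ → E}, ContDiff ℝ r f → ContDiff ℝ r g →
    (∀ j < r, iteratedDeriv j g a = 0 ∧ iteratedDeriv j g b = 0) →
    ∫ t in a..b, f t (iteratedDeriv r g t) = (-1 : ℝ) ^ r • ∫ t in a..b, iteratedDeriv r f t (g t)
  | 0, _, _, _, _, _ => by simp
  | r + 1, f, g, hf, hg, hbd => by
    have hgr : ContDiff ℝ 1 (iteratedDeriv r g) := by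
      rw [iteratedDeriv_eq_iterate]
      exact_mod_cast ContDiff.iterate_deriv' 1 r (by rwa [add_comm 1 r])
    have hf' : ContDiff ℝ r (deriv f) := (contDiff_succ_iff_deriv.mp (by exact_mod_cast hf)).2.2
    calc ∫ t in a..b, f t (iteratedDeriv (r + 1) g t)
        = -∫ t in a..b, deriv f t (iteratedDeriv r g t) := by
          rw [iteratedDeriv_succ]
          exact integral_clm_apply_deriv_eq_neg (hf.of_le (by simp)) hgr
            (hbd r r.lt_succ_self).1 (hbd r r.lt_succ_self).2
      _ = -((-1 : ℝ) ^ r • ∫ t in a..b, iteratedDeriv r (deriv f) t (g t)) := by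
          rw [integral_clm_apply_iteratedDeriv_eq r hf' (hg.of_le (by simp))
            fun j hj => hbd j (hj.trans r.lt_succ_self)]
      _ = (-1 : ℝ) ^ (r + 1) • ∫ t in a..b, iteratedDeriv (r + 1) f t (g t) := by
          rw [iteratedDeriv_succ', pow_succ, mul_smul, neg_one_smul, smul_neg]

end IntegrationByParts

section EulerLagrange

variable {E W : Type*} [NormedAddCommGroup E] [NormedSpace ℝ E]
  [NormedAddCommGroup W] [NormedSpace ℝ W] [CompleteSpace W]

theorem integral_fderiv_jet_eq_integral_eulerLagrange {k : ℕ} {L : (Fin (k + 1) → E) → W}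
    (hL : ContDiff ℝ ∞ L) {q h : ℝ → E} (hq : ContDiff ℝ ∞ q) (hh : ContDiff ℝ ∞ h) {a b : ℝ}
    (hbd : ∀ j < k, iteratedDeriv j h a = 0 ∧ iteratedDeriv j h b = 0) :
    ∫ t in a..b, fderiv ℝ L (jet k q t) (jet k h t) = ∫ t in a..b, eulerLagrange L q t (h t) := by
  set P : ℕ → ℝ → E →L[ℝ] W := fun r u => pd L r (jet k q u)
  have hP : ∀ r, ContDiff ℝ ∞ (P r) := fun r => (contDiff_pd hL r).comp (contDiff_jet k hq)
  calc ∫ t in a..b, fderiv ℝ L (jet k q t) (jet k h t)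
      = ∫ t in a..b, ∑ r ∈ Finset.range (k + 1), P r t (iteratedDeriv r h t) :=
        integral_congr fun t _ => by
          rw [fderiv_apply_eq_sum_pd]
          exact Fin.sum_univ_eq_sum_range (fun r => P r t (iteratedDeriv r h t)) (k + 1)
    _ = ∑ r ∈ Finset.range (k + 1), ∫ t in a..b, P r t (iteratedDeriv r h t) :=
        integral_finsetSum fun r _ =>
          ((hP r).continuous.clm_apply (hh.continuous_iteratedDeriv r (mod_cast le_top)))
            |>.intervalIntegrable a b
    _ = ∑ r ∈ Finset.range (k + 1), (-1 : ℝ) ^ r • ∫ t in a..b, iteratedDeriv r (P r) t (h t) :=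
        Finset.sum_congr rfl fun r hr => integral_clm_apply_iteratedDeriv_eq r
          ((hP r).of_le (mod_cast le_top)) (hh.of_le (mod_cast le_top))
          fun j hj => hbd j (by simp at hr; omega)
    _ = ∫ t in a..b, ∑ r ∈ Finset.range (k + 1), (-1 : ℝ) ^ r • iteratedDeriv r (P r) t (h t) := by
        rw [integral_finsetSum (f := fun r t => (-1 : ℝ) ^ r • iteratedDeriv r (P r) t (h t))
          fun r _ => (((hP r).continuous_iteratedDeriv r (mod_cast le_top)).clm_apply
            hh.continuous |>.const_smul _).intervalIntegrable a b]
        simp only [intervalIntegral.integral_smul]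
    _ = ∫ t in a..b, eulerLagrange L q t (h t) :=
        integral_congr fun t _ => by simp [eulerLagrange, P]

end EulerLagrange

theorem first_variation_formula (n k : ℕ) (t₀ t₁ : ℝ)
    (L : (Fin (k + 1) → EuclideanSpace ℝ (Fin n)) → ℝ) (hL : ContDiff ℝ (⊤ : ℕ∞) L)
    (q h : ℝ → EuclideanSpace ℝ (Fin n))
    (hq : ContDiff ℝ (⊤ : ℕ∞) q) (hh : ContDiff ℝ (⊤ : ℕ∞) h)
    (hbd : ∀ j < k, iteratedDeriv j h t₀ = 0 ∧ iteratedDeriv j h t₁ = 0) :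
    HasDerivAt (fun s : ℝ => ∫ t in t₀..t₁, L (jet k (q + s • h) t))
      (∫ t in t₀..t₁,
        (∑ r ∈ Finset.range (k + 1),
          (-1 : ℝ) ^ r • iteratedDeriv r (fun u => pd L r (jet k q u)) t) (h t)) 0 := by
  have hvariation : ∀ s : ℝ, jet k (q + s • h) = fun t => jet k q t + s • jet k h t :=
    fun s => funext (jet_add_smul (hq.of_le (mod_cast le_top)) (hh.of_le (mod_cast le_top)) s)
  have hderiv := hasDerivAt_intervalIntegral_comp_add_smul (hL.of_le (mod_cast le_top))
    (contDiff_jet k hq).continuous (contDiff_jet k hh).continuous t₀ t₁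
  rw [integral_fderiv_jet_eq_integral_eulerLagrange hL hq hh hbd] at hderiv
  simp only [hvariation]
  exact hderiv
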